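/- arXiv:math/0511595 — 3 statements merged into one kernel-verified Lean document; each statement's English description precedes it below -/
import Mathlib

section
/- Let J₁,J₂,J₃ be almost (para)complex structures forming an almost hyper-paracomplex structure on a manifold M (J_α² = ε_α id, J_αJ_β = -J_βJ_α = -ε_γ J_γ), and let N_α := (1/2)[[J_α,J_α]], where [[·,·]] is the Nijenhuis bracket, be regarded as V-valued alternating bilinear maps satisfying the structural relation 2N_α(X,Y) = N_β(J_γX,J_γY) - J_γN_β(J_γX,Y) - J_γN_β(X,J_γY) - ε_γN_β(X,Y) + N_γ(J_βX,J_βY) - J_βN_γ(J_βX,Y) - J_βN_γ(X,J_βY) - ε_βN_γ(X,Y); then for the torsion tensor T^H = -(1/12) Σ_α ε_α [[J_α,J_α]] the pointwise algebraic identity (1/2)[[J_α,J_α]](X,Y) = -ε_α T^H(X,Y) + J_α T^H(X,J_αY) + J_α T^H(J_αX,Y) - T^H(J_αX,J_αY) holds for any vectors X,Y. -/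
/-- For an almost hyper-paracomplex structure `(J₁,J₂,J₃)`
(modelled on the Lie algebra of vector fields), with Nijenhuis brackets
`NB α = [[J_α,J_α]]`, `N_α = (1/2)[[J_α,J_α]]`, and torsion
`T^H = -(1/12) Σ_α ε_α [[J_α,J_α]]`, assuming the structural relation
`2N_α(X,Y) = N_β(J_γX,J_γY) - J_γN_β(J_γX,Y) - J_γN_β(X,J_γY) - ε_γN_β(X,Y)
 + N_γ(J_βX,J_βY) - J_βN_γ(J_βX,Y) - J_βN_γ(X,J_βY) - ε_βN_γ(X,Y)`
for all cyclic `(α,β,γ)`, one has the identity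
`(1/2)[[J_α,J_α]](X,Y) = -ε_αT^H(X,Y) + J_αT^H(X,J_αY) + J_αT^H(J_αX,Y)
 - T^H(J_αX,J_αY)`. -/
theorem nijenhuis_bracket_torsion_identity
    (V : Type*) [LieRing V] [Module ℝ V]
    (J : Fin 3 → (V →ₗ[ℝ] V)) (eps : Fin 3 → ℝ)
    (heps0 : eps 0 = 1) (heps1 : eps 1 = 1) (heps2 : eps 2 = -1)
    (hsq : ∀ α, J α ∘ₗ J α = eps α • (LinearMap.id : V →ₗ[ℝ] V))
    (hmul : ∀ α β γ : Fin 3,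
      ((α = 0 ∧ β = 1 ∧ γ = 2) ∨ (α = 1 ∧ β = 2 ∧ γ = 0) ∨
        (α = 2 ∧ β = 0 ∧ γ = 1)) →
      J α ∘ₗ J β = (-(eps γ)) • J γ)
    (NB : Fin 3 → V → V → V)
    (hNB : ∀ (α : Fin 3) (X Y : V),
      NB α X Y =
        ⁅J α X, J α Y⁆ - J α ⁅J α X, Y⁆ - J α ⁅X, J α Y⁆
        + ⁅J α X, J α Y⁆ - J α ⁅J α X, Y⁆ - J α ⁅X, J α Y⁆
        + (J α (J α ⁅X, Y⁆) + J α (J α ⁅X, Y⁆)))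
    (N : Fin 3 → V → V → V)
    (hN : ∀ (α : Fin 3) (X Y : V), N α X Y = (1 / 2 : ℝ) • NB α X Y)
    (hstruct : ∀ α β γ : Fin 3,
      ((α = 0 ∧ β = 1 ∧ γ = 2) ∨ (α = 1 ∧ β = 2 ∧ γ = 0) ∨
        (α = 2 ∧ β = 0 ∧ γ = 1)) →
      ∀ X Y : V,
        (2 : ℝ) • N α X Y =
          N β (J γ X) (J γ Y) - J γ (N β (J γ X) Y) - J γ (N β X (J γ Y))
          - eps γ • N β X Y
          + N γ (J β X) (J β Y) - J β (N γ (J β X) Y) - J β (N γ X (J β Y))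
          - eps β • N γ X Y)
    (TH : V → V → V)
    (hTH : ∀ X Y : V, TH X Y = (-(1 / 12) : ℝ) • ∑ α, eps α • NB α X Y) :
    ∀ (α : Fin 3) (X Y : V),
      (1 / 2 : ℝ) • NB α X Y =
        -(eps α) • TH X Y + J α (TH X (J α Y)) + J α (TH (J α X) Y)
        - TH (J α X) (J α Y) := by
  have hsq' : ∀ (a : Fin 3) (v : V), J a (J a v) = eps a • v := fun a v => by
    have := LinearMap.ext_iff.mp (hsq a) v
    simpa using this
  have hmul' : ∀ (a b c : Fin 3),
      ((a = 0 ∧ b = 1 ∧ c = 2) ∨ (a = 1 ∧ b = 2 ∧ c = 0) ∨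
        (a = 2 ∧ b = 0 ∧ c = 1)) → ∀ v : V, J a (J b v) = (-(eps c)) • J c v := by
    intro a b c h v
    have := LinearMap.ext_iff.mp (hmul a b c h) v
    simpa using this
  have h00 : ∀ v : V, J 0 (J 0 v) = v := fun v => by rw [hsq' 0 v, heps0, one_smul]
  have h11 : ∀ v : V, J 1 (J 1 v) = v := fun v => by rw [hsq' 1 v, heps1, one_smul]
  have h22 : ∀ v : V, J 2 (J 2 v) = -v := fun v => by
    rw [hsq' 2 v, heps2]; simp
  have h01 : ∀ v : V, J 0 (J 1 v) = J 2 v := fun v => by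
    rw [hmul' 0 1 2 (by simp) v, heps2]; simp
  have h12 : ∀ v : V, J 1 (J 2 v) = -J 0 v := fun v => by
    rw [hmul' 1 2 0 (by simp) v, heps0]; simp
  have h20 : ∀ v : V, J 2 (J 0 v) = -J 1 v := fun v => by
    rw [hmul' 2 0 1 (by simp) v, heps1]; simp
  have h10 : ∀ v : V, J 1 (J 0 v) = -J 2 v := fun v => by
    have h1 : J 1 (J 0 v) = -J 2 (J 0 (J 0 v)) := by rw [h20 (J 0 v)]; simp
    rw [h1, h00]
  have h21 : ∀ v : V, J 2 (J 1 v) = J 0 v := fun v => by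
    have h1 : J 2 (J 1 v) = J 0 (J 1 (J 1 v)) := by rw [h01 (J 1 v)]
    rw [h1, h11]
  have h02 : ∀ v : V, J 0 (J 2 v) = J 1 v := fun v => by
    have h1 : J 0 (J 2 v) = -J 1 (J 2 (J 2 v)) := by rw [h12 (J 2 v)]; simp
    rw [h1, h22]; simp
  intro α X Y
  have hcases : α = 0 ∨ α = 1 ∨ α = 2 := by omega
  rcases hcases with h | h | h <;> subst h <;>
  · simp only [hTH, Fin.sum_univ_three, hNB, heps0, heps1, heps2, Fin.isValue]
    simp only [map_add, map_sub, map_neg, map_smul, h00, h11, h22, h01, h02,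
      h10, h12, h20, h21, lie_neg, neg_lie, lie_smul, smul_lie, smul_add,
      smul_sub, smul_neg, one_smul, neg_neg, neg_smul]
    module
end

section
/- Let ρ₁,ρ₂,ρ₃ be bilinear forms on a vector space V with paraquaternionic triple (J_α) satisfying, for all cyclic permutations (α,β,γ) of (1,2,3), the identity ρ_α(J_βX,J_βY) + ε_β ρ_α(X,Y) + ε_γ ρ_γ(J_βX,Y) + ε_γ ρ_γ(X,J_βY) = 0. Then for each cyclic (α,β,γ): 2(ε_αρ_α(X,J_αY) + ε_αρ_α(J_αX,Y)) = ε_γρ_γ(J_γX,Y) + ε_γρ_γ(X,J_γY) + ε_βρ_β(J_βX,Y) + ε_βρ_β(X,J_βY) + ρ_γ(J_αX,J_βY) + ρ_γ(J_βX,J_αY) - ρ_β(J_αX,J_γY) - ρ_β(J_γX,J_αY). -/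
/-- If bilinear forms `ρ₁,ρ₂,ρ₃` on a space with
paraquaternionic triple `(J_α)` satisfy, for all cyclic `(α,β,γ)`,
`ρ_α(J_βX,J_βY) + ε_β ρ_α(X,Y) + ε_γ ρ_γ(J_βX,Y) + ε_γ ρ_γ(X,J_βY) = 0`,
then for each cyclic `(α,β,γ)`:
`2(ε_αρ_α(X,J_αY) + ε_αρ_α(J_αX,Y)) = ε_γρ_γ(J_γX,Y) + ε_γρ_γ(X,J_γY)
 + ε_βρ_β(J_βX,Y) + ε_βρ_β(X,J_βY) + ρ_γ(J_αX,J_βY) + ρ_γ(J_βX,J_αY)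
 - ρ_β(J_αX,J_γY) - ρ_β(J_γX,J_αY)`. -/
theorem ricci_form_symmetrized_identity
    (V : Type*) [AddCommGroup V] [Module ℝ V]
    (J : Fin 3 → (V →ₗ[ℝ] V)) (eps : Fin 3 → ℝ)
    (heps0 : eps 0 = 1) (heps1 : eps 1 = 1) (heps2 : eps 2 = -1)
    (hsq : ∀ α, J α ∘ₗ J α = eps α • (LinearMap.id : V →ₗ[ℝ] V))
    (hmul : ∀ α β γ : Fin 3,
      ((α = 0 ∧ β = 1 ∧ γ = 2) ∨ (α = 1 ∧ β = 2 ∧ γ = 0) ∨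
        (α = 2 ∧ β = 0 ∧ γ = 1)) →
      J α ∘ₗ J β = (-(eps γ)) • J γ)
    (rho : Fin 3 → LinearMap.BilinForm ℝ V)
    (hyp : ∀ α β γ : Fin 3,
      ((α = 0 ∧ β = 1 ∧ γ = 2) ∨ (α = 1 ∧ β = 2 ∧ γ = 0) ∨
        (α = 2 ∧ β = 0 ∧ γ = 1)) →
      ∀ X Y : V,
        rho α (J β X) (J β Y) + eps β * rho α X Y
          + eps γ * rho γ (J β X) Y + eps γ * rho γ X (J β Y) = 0) :
    ∀ α β γ : Fin 3,
      ((α = 0 ∧ β = 1 ∧ γ = 2) ∨ (α = 1 ∧ β = 2 ∧ γ = 0) ∨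
        (α = 2 ∧ β = 0 ∧ γ = 1)) →
      ∀ X Y : V,
        2 * (eps α * rho α X (J α Y) + eps α * rho α (J α X) Y) =
          eps γ * rho γ (J γ X) Y + eps γ * rho γ X (J γ Y)
          + eps β * rho β (J β X) Y + eps β * rho β X (J β Y)
          + rho γ (J α X) (J β Y) + rho γ (J β X) (J α Y)
          - rho β (J α X) (J γ Y) - rho β (J γ X) (J α Y) := by

  intro α β γ hc X Y
  have e00 : ∀ v : V, J 0 (J 0 v) = v := fun v => by
    have := LinearMap.ext_iff.mp (hsq 0) v
    simpa [heps0] using this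
  have e11 : ∀ v : V, J 1 (J 1 v) = v := fun v => by
    have := LinearMap.ext_iff.mp (hsq 1) v
    simpa [heps1] using this
  have e22 : ∀ v : V, J 2 (J 2 v) = -v := fun v => by
    have := LinearMap.ext_iff.mp (hsq 2) v
    simpa [heps2] using this
  have e01 : ∀ v : V, J 0 (J 1 v) = J 2 v := fun v => by
    have := LinearMap.ext_iff.mp (hmul 0 1 2 (Or.inl ⟨rfl, rfl, rfl⟩)) v
    simpa [heps2] using this
  have e12 : ∀ v : V, J 1 (J 2 v) = -(J 0 v) := fun v => by
    have := LinearMap.ext_iff.mp (hmul 1 2 0 (Or.inr (Or.inl ⟨rfl, rfl, rfl⟩))) v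
    simpa [heps0] using this
  have e20 : ∀ v : V, J 2 (J 0 v) = -(J 1 v) := fun v => by
    have := LinearMap.ext_iff.mp (hmul 2 0 1 (Or.inr (Or.inr ⟨rfl, rfl, rfl⟩))) v
    simpa [heps1] using this
  have e10 : ∀ v : V, J 1 (J 0 v) = -(J 2 v) := fun v => by
    have h : J 0 v = -(J 1 (J 2 v)) := by rw [e12 v, neg_neg]
    rw [h, map_neg, e11]
  have e21 : ∀ v : V, J 2 (J 1 v) = J 0 v := fun v => by
    have h : J 1 v = -(J 2 (J 0 v)) := by rw [e20 v, neg_neg]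
    rw [h, map_neg, e22, neg_neg]
  have e02 : ∀ v : V, J 0 (J 2 v) = J 1 v := fun v => by
    have h : J 2 v = J 0 (J 1 v) := (e01 v).symm
    rw [h, e00]
  have H1 := hyp 0 1 2 (Or.inl ⟨rfl, rfl, rfl⟩)
  have H2 := hyp 1 2 0 (Or.inr (Or.inl ⟨rfl, rfl, rfl⟩))
  have H3 := hyp 2 0 1 (Or.inr (Or.inr ⟨rfl, rfl, rfl⟩))
  rcases hc with ⟨rfl, rfl, rfl⟩ | ⟨rfl, rfl, rfl⟩ | ⟨rfl, rfl, rfl⟩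
  · have A := H1 X (J 0 Y)
    have B := H1 (J 0 X) Y
    have C := H2 X (J 1 Y)
    have D := H2 (J 0 X) (J 2 Y)
    simp only [e00, e01, e02, e10, e11, e12, e20, e21, e22,
      map_neg, LinearMap.neg_apply, heps0, heps1, heps2] at A B C D ⊢
    linear_combination A + B + C - D
  · have A := H1 X (J 0 Y)
    have B := H1 (J 0 X) Y
    have C := H2 (J 0 X) (J 2 Y)
    have D := H3 X (J 2 Y)
    simp only [e00, e01, e02, e10, e11, e12, e20, e21, e22,
      map_neg, LinearMap.neg_apply, heps0, heps1, heps2] at A B C D ⊢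
    linear_combination -A + B + 2 * C + 2 * D
  · have A := H1 (J 0 X) Y
    have B := H2 X (J 1 Y)
    have C := H2 (J 0 X) (J 2 Y)
    have D := H3 X (J 2 Y)
    simp only [e00, e01, e02, e10, e11, e12, e20, e21, e22,
      map_neg, LinearMap.neg_apply, heps0, heps1, heps2] at A B C D ⊢
    linear_combination -2 * A - B - C - 2 * D
end

section
/- Let (V,g,(J_α)) be as above with n > 1, and suppose λ ∈ ℝ and a 1-form φ satisfy the relation λ·T = -ε_α (J_αφ) ∧ F_α simultaneously for all three α = 1,2,3, where T is an alternating 3-form whose torsion 1-form traces t_α(X) = (ε_α/2)Σᵢεᵢ T(X,eᵢ,J_αeᵢ) satisfy J₁t₁ = J₂t₂ = J₃t₃. Then taking traces yields 4(n-1)·(J_αφ) = 0 for each α, hence φ = 0 and λT = 0; in particular if λ ≠ 0 then T = 0. -/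
/-- On a 4n-dimensional (n>1) pseudo-Euclidean space with
compatible paraquaternionic triple, if `λ·T = -ε_α (J_αφ)∧F_α` holds
simultaneously for all `α = 1,2,3` (with `(J_αφ)(X) = -φ(J_αX)`,
`F_α(X,Y) = g(X,J_αY)`), where `T` is an alternating 3-form whose torsion
1-forms `t_α(X) = (ε_α/2)Σᵢεᵢ T(X,eᵢ,J_αeᵢ)` satisfy `J₁t₁ = J₂t₂ = J₃t₃`,
then `4(n-1)(J_αφ) = 0` for each `α`, hence `φ = 0` and `λT = 0`; in
particular if `λ ≠ 0` then `T = 0`. -/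
theorem lambda_torsion_forces_vanishing
    (n : ℕ) (hn : 1 < n) (V : Type*) [AddCommGroup V] [Module ℝ V]
    (g : LinearMap.BilinForm ℝ V)
    (J : Fin 3 → (V →ₗ[ℝ] V)) (eps : Fin 3 → ℝ)
    (heps0 : eps 0 = 1) (heps1 : eps 1 = 1) (heps2 : eps 2 = -1)
    (hsq : ∀ α, J α ∘ₗ J α = eps α • (LinearMap.id : V →ₗ[ℝ] V))
    (hmul : ∀ α β γ : Fin 3,
      ((α = 0 ∧ β = 1 ∧ γ = 2) ∨ (α = 1 ∧ β = 2 ∧ γ = 0) ∨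
        (α = 2 ∧ β = 0 ∧ γ = 1)) →
      J α ∘ₗ J β = (-(eps γ)) • J γ)
    (hcompat : ∀ (α : Fin 3) (X Y : V), g (J α X) (J α Y) = -(eps α) * g X Y)
    (e : Fin (4 * n) → V) (epsi : Fin (4 * n) → ℝ)
    (hepsi : ∀ i, epsi i = 1 ∨ epsi i = -1)
    (horth : ∀ i j, g (e i) (e j) = if i = j then epsi i else 0)
    (hbasis : ∀ X : V, X = ∑ i, (epsi i * g X (e i)) • e i)
    (lam : ℝ) (φ : V →ₗ[ℝ] ℝ)
    (F : Fin 3 → V → V → ℝ)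
    (hF : ∀ (α : Fin 3) (X Y : V), F α X Y = g X (J α Y))
    (Jφ : Fin 3 → V → ℝ)
    (hJφ : ∀ (α : Fin 3) (X : V), Jφ α X = -φ (J α X))
    (T : AlternatingMap ℝ V ℝ (Fin 3))
    (hlamT : ∀ (α : Fin 3) (X Y Z : V),
      lam * T ![X, Y, Z] =
        -(eps α) * (Jφ α X * F α Y Z + Jφ α Y * F α Z X + Jφ α Z * F α X Y))
    (t : Fin 3 → V → ℝ)
    (ht : ∀ (α : Fin 3) (X : V),
      t α X = eps α / 2 * ∑ i, epsi i * T ![X, e i, J α (e i)])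
    (htcoincide : ∀ X : V,
      -t 0 (J 0 X) = -t 1 (J 1 X) ∧ -t 1 (J 1 X) = -t 2 (J 2 X)) :
    (∀ (α : Fin 3) (X : V), 4 * ((n : ℝ) - 1) * Jφ α X = 0)
    ∧ (∀ X : V, φ X = 0)
    ∧ (∀ X Y Z : V, lam * T ![X, Y, Z] = 0)
    ∧ (lam ≠ 0 → ∀ X Y Z : V, T ![X, Y, Z] = 0) := by
  have hsq' : ∀ (α : Fin 3) (x : V), J α (J α x) = eps α • x := by
    intro α x
    have h := LinearMap.congr_fun (hsq α) x
    rwa [LinearMap.comp_apply, LinearMap.smul_apply, LinearMap.id_apply] at h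
  have hmulp : ∀ (α β γ : Fin 3),
      ((α = 0 ∧ β = 1 ∧ γ = 2) ∨ (α = 1 ∧ β = 2 ∧ γ = 0) ∨
        (α = 2 ∧ β = 0 ∧ γ = 1)) →
      ∀ x, J α (J β x) = (-(eps γ)) • J γ x := by
    intro α β γ hc x
    have h := LinearMap.congr_fun (hmul α β γ hc) x
    rwa [LinearMap.comp_apply, LinearMap.smul_apply] at h
  have hepsval : ∀ δ : Fin 3, eps δ = 1 ∨ eps δ = -1 := by
    intro δ; fin_cases δ
    · exact Or.inl heps0
    · exact Or.inl heps1
    · exact Or.inr heps2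
  have expand : ∀ X Y : V, g X Y = ∑ i, (epsi i * g Y (e i)) * g X (e i) := by
    intro X Y
    conv_lhs => rw [hbasis Y]
    rw [map_sum]
    exact Finset.sum_congr rfl fun i _ => by rw [map_smul, smul_eq_mul]
  have hsym : ∀ X Y : V, g X Y = g Y X := by
    intro X Y
    rw [expand X Y, expand Y X]
    exact Finset.sum_congr rfl fun i _ => by ring
  have hrep : ∀ (ψ : V →ₗ[ℝ] ℝ) (Y : V),
      (∑ i, epsi i * g Y (e i) * ψ (e i)) = ψ Y := by
    intro ψ Y
    conv_rhs => rw [hbasis Y]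
    rw [map_sum]
    exact Finset.sum_congr rfl fun i _ => by rw [map_smul, smul_eq_mul, mul_assoc]
  have hrepJ : ∀ (δ : Fin 3) (Y : V),
      (∑ i, epsi i * g Y (e i) * φ (J δ (e i))) = φ (J δ Y) := by
    intro δ Y
    have h := hrep (φ ∘ₗ J δ) Y
    simpa [LinearMap.comp_apply] using h
  have hskew : ∀ (δ : Fin 3) (X Y : V), g X (J δ Y) = -(g (J δ X) Y) := by
    intro δ X Y
    have h := hcompat δ X (J δ Y)
    rw [hsq' δ Y, map_smul, smul_eq_mul] at h
    rcases hepsval δ with h' | h' <;> rw [h'] at h <;> linarith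
  have hdiag : ∀ (δ : Fin 3) (Y : V), g Y (J δ Y) = 0 := by
    intro δ Y
    have h1 := hskew δ Y Y
    have h2 := hsym Y (J δ Y)
    linarith [h1, h2]
  have hsumsq : (∑ i : Fin (4 * n), epsi i * epsi i) = ((4 * n : ℕ) : ℝ) := by
    have h : ∀ i : Fin (4 * n), epsi i * epsi i = 1 := by
      intro i; rcases hepsi i with h | h <;> rw [h] <;> norm_num
    rw [Finset.sum_congr rfl fun i _ => h i]
    simp
  have key : ∀ α β γ : Fin 3,
      (∀ x, J α (J β x) = (-(eps γ)) • J γ x) →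
      (∀ x, J β (J γ x) = (-(eps α)) • J α x) →
      (∀ x, J γ (J α x) = (-(eps β)) • J β x) →
      eps α * eps β * eps γ = -1 →
      ∀ X : V, (4 * (n : ℝ) - 4) * φ (J β X) = 0 := by
    intro α β γ hab hbc hca habc X
    have hva := hepsval α
    have hvb := hepsval β
    have hvc := hepsval γ
    have hba : ∀ x, J β (J α x) = (-(eps α * eps β)) • J γ x := by
      intro x
      have h1 : J α x = (-(eps α)) • J β (J γ x) := by
        rw [hbc x, smul_smul]
        rcases hva with h | h <;> rw [h] <;> norm_num
      rw [h1, map_smul, hsq' β (J γ x), smul_smul,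
        show -(eps α) * eps β = -(eps α * eps β) from by ring]
    have hac : ∀ x, J α (J γ x) = (-(eps γ * eps α)) • J β x := by
      intro x
      have h1 : J γ x = (-(eps γ)) • J α (J β x) := by
        rw [hab x, smul_smul]
        rcases hvc with h | h <;> rw [h] <;> norm_num
      rw [h1, map_smul, hsq' α (J β x), smul_smul,
        show -(eps γ) * eps α = -(eps γ * eps α) from by ring]
    have hS1 : (∑ i, epsi i * (lam * T ![X, e i, J β (e i)]))
        = (4 * (n : ℝ) - 2) * φ (J β X) := by
      have hterm : ∀ i : Fin (4 * n), epsi i * (lam * T ![X, e i, J β (e i)])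
          = φ (J β X) * (epsi i * epsi i)
            - epsi i * g X (e i) * φ (J β (e i))
            - epsi i * g (J β X) (e i) * φ (e i) := by
        intro i
        rw [hlamT β X (e i) (J β (e i))]
        simp only [hJφ, hF]
        have f1 : g (e i) (J β (J β (e i))) = eps β * epsi i := by
          rw [hsq' β (e i), map_smul, smul_eq_mul, horth]
          simp
        have f2 := hcompat β (e i) X
        have f3 : φ (J β (J β (e i))) = eps β * φ (e i) := by
          rw [hsq' β (e i), map_smul, smul_eq_mul]
        have f4 := hskew β X (e i)
        have f5 := hsym (e i) X
        rw [f1, f2, f3, f4, f5]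
        rcases hvb with h | h <;> rw [h] <;> ring
      rw [Finset.sum_congr rfl fun i _ => hterm i]
      rw [Finset.sum_sub_distrib, Finset.sum_sub_distrib, ← Finset.mul_sum,
        hsumsq, hrepJ β X, hrep φ (J β X)]
      push_cast
      ring
    have hS2 : (∑ i, epsi i * (lam * T ![X, e i, J β (e i)]))
        = 2 * φ (J β X) := by
      have hterm : ∀ i : Fin (4 * n), epsi i * (lam * T ![X, e i, J β (e i)])
          = eps β * (epsi i * g (J γ X) (e i) * φ (J α (e i)))
            + (eps α * eps γ) * (epsi i * g (J α X) (e i) * φ (J γ (e i))) := by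
        intro i
        rw [hlamT α X (e i) (J β (e i))]
        simp only [hJφ, hF]
        have e1 : g (e i) (J α (J β (e i))) = 0 := by
          rw [hab (e i), map_smul, smul_eq_mul, hdiag γ (e i), mul_zero]
        have e2 : g (J β (e i)) (J α X) = (eps α * eps β) * g (J γ X) (e i) := by
          rw [hsym (J β (e i)) (J α X), hskew β (J α X) (e i), hba X, map_smul,
            LinearMap.smul_apply, smul_eq_mul]
          ring
        have e3 := hskew α X (e i)
        have e4 : φ (J α (J β (e i))) = (-(eps γ)) * φ (J γ (e i)) := by
          rw [hab (e i), map_smul, smul_eq_mul]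
        rw [e1, e2, e3, e4]
        rcases hva with h | h <;> rw [h] <;> ring
      rw [Finset.sum_congr rfl fun i _ => hterm i]
      rw [Finset.sum_add_distrib, ← Finset.mul_sum, ← Finset.mul_sum,
        hrepJ α (J γ X), hrepJ γ (J α X)]
      have p1 : φ (J α (J γ X)) = (-(eps γ * eps α)) * φ (J β X) := by
        rw [hac X, map_smul, smul_eq_mul]
      have p2 : φ (J γ (J α X)) = (-(eps β)) * φ (J β X) := by
        rw [hca X, map_smul, smul_eq_mul]
      rw [p1, p2]
      rcases hva with ha | ha <;> rcases hvb with hb | hb <;> rcases hvc with hc | hc <;>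
        rw [ha, hb, hc] at habc ⊢ <;> first | ring1 | norm_num at habc
    linear_combination hS2 - hS1
  have c012 : eps 0 * eps 1 * eps 2 = -1 := by rw [heps0, heps1, heps2]; norm_num
  have c120 : eps 1 * eps 2 * eps 0 = -1 := by rw [heps1, heps2, heps0]; norm_num
  have c201 : eps 2 * eps 0 * eps 1 = -1 := by rw [heps2, heps0, heps1]; norm_num
  have m01 := hmulp 0 1 2 (Or.inl ⟨rfl, rfl, rfl⟩)
  have m12 := hmulp 1 2 0 (Or.inr (Or.inl ⟨rfl, rfl, rfl⟩))
  have m20 := hmulp 2 0 1 (Or.inr (Or.inr ⟨rfl, rfl, rfl⟩))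
  have k1 := key 0 1 2 m01 m12 m20 c012
  have k2 := key 1 2 0 m12 m20 m01 c120
  have k0 := key 2 0 1 m20 m01 m12 c201
  have h4n : (4 * (n : ℝ) - 4) ≠ 0 := by
    have h2 : 2 ≤ n := hn
    have h2' : (2 : ℝ) ≤ (n : ℝ) := by exact_mod_cast h2
    have : (0 : ℝ) < 4 * (n : ℝ) - 4 := by linarith
    exact ne_of_gt this
  have hφJ : ∀ (δ : Fin 3) (X : V), φ (J δ X) = 0 := by
    intro δ X
    fin_cases δ
    · exact (mul_eq_zero.mp (k0 X)).resolve_left h4n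
    · exact (mul_eq_zero.mp (k1 X)).resolve_left h4n
    · exact (mul_eq_zero.mp (k2 X)).resolve_left h4n
  have hφ0 : ∀ X : V, φ X = 0 := by
    intro X
    have h := hφJ 0 (J 0 X)
    rw [hsq' 0 X, map_smul, smul_eq_mul, heps0, one_mul] at h
    exact h
  have hT0 : ∀ X Y Z : V, lam * T ![X, Y, Z] = 0 := by
    intro X Y Z
    rw [hlamT 0 X Y Z]
    simp only [hJφ]
    rw [hφJ 0 X, hφJ 0 Y, hφJ 0 Z]
    ring
  refine ⟨?_, hφ0, hT0, ?_⟩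
  · intro α X
    rw [hJφ α X, hφJ α X]
    ring
  · intro hlam X Y Z
    exact (mul_eq_zero.mp (hT0 X Y Z)).resolve_left hlam
end
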